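/- arXiv:1503.06396 — 6 statements merged into one kernel-verified Lean document; each statement's English description precedes it below -/
import Mathlib

section
/- If X is a Hausdorff topological space and F is a finite topologically contracting system of continuous self-maps of X with X = ⋃_{f∈F} f(X), then X is compact and metrizable. -/
open Set

/-- A finite family `F` of self-maps of `X` is topologically contracting if for every
open cover `U` of `X` there is `n ∈ ℕ` such that for all `f₁, …, fₙ ∈ F` the set
`f₁ ∘ ⋯ ∘ fₙ (X)` is contained in some member of `U`. -/
def TopContracting {X : Type} [TopologicalSpace X] (F : Set (X → X)) : Prop :=
  ∀ U : Set (Set X), (∀ u ∈ U, IsOpen u) → ⋃₀ U = univ →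
    ∃ n : ℕ, 0 < n ∧ ∀ g : Fin n → (X → X), (∀ i, g i ∈ F) →
      ∃ u ∈ U, Set.range (List.foldr (· ∘ ·) id (List.ofFn g)) ⊆ u

/-- Composition of a word of maps. -/
def wcomp {X : Type} {n : ℕ} (g : Fin n → (X → X)) : X → X :=
  List.foldr (· ∘ ·) id (List.ofFn g)

lemma wcomp_zero {X : Type} (g : Fin 0 → (X → X)) : wcomp g = id := by
  simp [wcomp]

lemma wcomp_cons {X : Type} {n : ℕ} (f : X → X) (g : Fin n → (X → X)) :
    wcomp (Fin.cons f g) = f ∘ wcomp g := by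
  simp [wcomp, List.ofFn_succ]

lemma wcomp_continuous {X : Type} [TopologicalSpace X] {F : Set (X → X)}
    (hcont : ∀ f ∈ F, Continuous f) :
    ∀ {n : ℕ} (g : Fin n → (X → X)), (∀ i, g i ∈ F) → Continuous (wcomp g) := by
  intro n
  induction n with
  | zero => intro g _; rw [wcomp_zero]; exact continuous_id
  | succ n ih =>
    intro g hg
    have : g = Fin.cons (g 0) (fun i => g i.succ) := by
      ext i; exact (Fin.cons_self_tail g).symm ▸ rfl
    rw [this, wcomp_cons]
    exact (hcont _ (hg 0)).comp (ih _ fun i => hg i.succ)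

lemma wcomp_cover {X : Type} [TopologicalSpace X] {F : Set (X → X)}
    (hcover : (⋃ f ∈ F, Set.range f) = univ) :
    ∀ (n : ℕ) (x : X), ∃ g : Fin n → (X → X), (∀ i, g i ∈ F) ∧ x ∈ range (wcomp g) := by
  intro n
  induction n with
  | zero =>
    intro x
    refine ⟨fun i => i.elim0, fun i => i.elim0, ?_⟩
    rw [wcomp_zero]; exact ⟨x, rfl⟩
  | succ n ih =>
    intro x
    have hx : x ∈ ⋃ f ∈ F, Set.range f := by rw [hcover]; trivial
    obtain ⟨f, hf, y, hy⟩ := by simpa using hx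
    obtain ⟨g, hg, z, hz⟩ := ih y
    refine ⟨Fin.cons f g, ?_, z, ?_⟩
    · intro i
      refine Fin.cases ?_ ?_ i
      · simpa using hf
      · intro j; simpa using hg j
    · rw [wcomp_cons]
      simp only [Function.comp_apply, hz, hy]

/-- Every topological fractal is compact and metrizable. -/
theorem stmt0 {X : Type} [TopologicalSpace X] [T2Space X]
    (F : Set (X → X)) (hfin : F.Finite) (hcont : ∀ f ∈ F, Continuous f)
    (hcover : (⋃ f ∈ F, Set.range f) = univ) (hc : TopContracting F) :
    CompactSpace X ∧ TopologicalSpace.MetrizableSpace X := by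
  haveI : Finite ↥F := hfin.to_subtype
  -- finiteness of the set of words of length n
  have hWfin : ∀ n : ℕ, (univ.pi fun _ : Fin n => F).Finite :=
    fun n => Set.Finite.pi fun _ => hfin
  -- compactness
  haveI hcompact : CompactSpace X := by
    constructor
    apply isCompact_of_finite_subcover
    intro ι U hU hsub
    have hUuniv : ⋃₀ Set.range U = univ := by
      rw [Set.sUnion_range]
      exact eq_univ_of_univ_subset hsub
    obtain ⟨n, -, hP⟩ := hc (Set.range U) (by rintro u ⟨i, rfl⟩; exact hU i) hUuniv
    -- choice of an index for each word
    have hsel : ∀ g ∈ (univ.pi fun _ : Fin n => F), ∃ i, range (wcomp g) ⊆ U i := by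
      intro g hg
      obtain ⟨u, ⟨i, rfl⟩, hsub'⟩ := hP g (fun i => hg i (mem_univ i))
      exact ⟨i, hsub'⟩
    haveI := (hWfin n).to_subtype
    set c : ↥(univ.pi fun _ : Fin n => F) → ι := fun g => (hsel g.1 g.2).choose with hc'
    refine ⟨(Set.finite_range c).toFinset, ?_⟩
    intro x _
    obtain ⟨g, hg, hx⟩ := wcomp_cover hcover n x
    have hg' : g ∈ (univ.pi fun _ : Fin n => F) := fun i _ => hg i
    exact Set.mem_biUnion ((Set.finite_range c).mem_toFinset.mpr ⟨⟨g, hg'⟩, rfl⟩)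
      ((hsel g hg').choose_spec hx)
  -- each word image is compact, hence closed
  have hclosed : ∀ (n : ℕ) (g : Fin n → (X → X)), (∀ i, g i ∈ F) →
      IsClosed (range (wcomp g)) := by
    intro n g hg
    have : IsCompact (range (wcomp g)) :=
      isCompact_range (wcomp_continuous hcont g hg)
    exact this.isClosed
  -- the family of word images of length n
  set Wn : ℕ → Set (Set X) :=
    fun n => (fun g => range (wcomp g)) '' (univ.pi fun _ : Fin n => F) with hWn
  have hWnfin : ∀ n, (Wn n).Finite := fun n => (hWfin n).image _
  -- the candidate base
  set B : Set (Set X) := ⋃ n, (fun G => (⋃₀ G)ᶜ) '' {G | G ⊆ Wn n} with hB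
  have hBcount : B.Countable := by
    refine countable_iUnion fun n => Set.Finite.countable ?_
    exact Set.Finite.image _ ((hWnfin n).finite_subsets)
  have hBopen : ∀ v ∈ B, IsOpen v := by
    intro v hv
    simp only [hB, mem_iUnion, mem_image, mem_setOf_eq] at hv
    obtain ⟨n, G, hG, rfl⟩ := hv
    rw [isOpen_compl_iff, Set.sUnion_eq_biUnion]
    refine Set.Finite.isClosed_biUnion ((hWnfin n).subset hG) ?_
    intro S hS
    obtain ⟨g, hg, rfl⟩ := hG hS
    exact hclosed n g (fun i => hg i (mem_univ i))
  have hBbasis : TopologicalSpace.IsTopologicalBasis B := by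
    apply TopologicalSpace.isTopologicalBasis_of_isOpen_of_nhds hBopen
    intro x u hxu hu
    -- apply contracting condition to the cover {u, {x}ᶜ}
    have hcov : ⋃₀ ({u, {x}ᶜ} : Set (Set X)) = univ := by
      apply eq_univ_of_forall
      intro y
      rcases eq_or_ne y x with rfl | hyx
      · exact ⟨u, by simp, hxu⟩
      · exact ⟨{x}ᶜ, by simp, hyx⟩
    have hop : ∀ w ∈ ({u, {x}ᶜ} : Set (Set X)), IsOpen w := by
      rintro w (rfl | rfl)
      · exact hu
      · exact isOpen_compl_singleton
    obtain ⟨n, -, hP⟩ := hc {u, {x}ᶜ} hop hcov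
    -- the basic set
    set G : Set (Set X) := {S ∈ Wn n | x ∉ S} with hG
    refine ⟨(⋃₀ G)ᶜ, ?_, ?_, ?_⟩
    · simp only [hB, mem_iUnion, mem_image, mem_setOf_eq]
      exact ⟨n, G, fun S hS => hS.1, rfl⟩
    · intro hx
      obtain ⟨S, hS, hxS⟩ := hx
      exact hS.2 hxS
    · intro y hy
      obtain ⟨g, hg, hyg⟩ := wcomp_cover hcover n y
      have hSW : range (wcomp g) ∈ Wn n := ⟨g, fun i _ => hg i, rfl⟩
      have hxS : x ∈ range (wcomp g) := by
        by_contra hxS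
        exact hy ⟨range (wcomp g), ⟨hSW, hxS⟩, hyg⟩
      obtain ⟨w, hw, hsub'⟩ := hP g hg
      have hsub'' : range (wcomp g) ⊆ w := hsub'
      rcases hw with rfl | rfl
      · exact hsub'' hyg
      · exact absurd (hsub'' hxS) (by simp)
  haveI : SecondCountableTopology X := hBbasis.secondCountableTopology hBcount
  exact ⟨hcompact, inferInstance⟩
end

section
/- If X is a compact Hausdorff space, F is a finite topologically contracting family of continuous self-maps of X with X = ⋃_{f∈F} f(X), then the collection N = { f₁∘⋯∘fₙ(X) : n ∈ ℕ, f₁,…,fₙ ∈ F } is a countable network for the topology of X, i.e., for every point x ∈ X and every open neighborhood U of x there is N ∈ N with x ∈ N ⊆ U. -/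
open Set

/-- The family of all sets `f₁ ∘ ⋯ ∘ fₙ (X)` with `n ∈ ℕ`, `f₁, …, fₙ ∈ F`. -/
def netFam {X : Type} (F : Set (X → X)) : Set (Set X) :=
  {S | ∃ n : ℕ, 0 < n ∧ ∃ g : Fin n → (X → X), (∀ i, g i ∈ F) ∧
      S = Set.range (List.foldr (· ∘ ·) id (List.ofFn g))}

lemma comp_cons {X : Type} {n : ℕ} (f : X → X) (g : Fin n → X → X) :
    List.foldr (· ∘ ·) id (List.ofFn (Fin.cons f g)) =
      f ∘ List.foldr (· ∘ ·) id (List.ofFn g) := by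
  rw [List.ofFn_succ]
  simp [Fin.cons_succ]

/-- For a topological fractal, the images of compositions of maps from `F` form a
countable network of the topology. -/
theorem stmt1 {X : Type} [TopologicalSpace X] [CompactSpace X] [T2Space X]
    (F : Set (X → X)) (hfin : F.Finite) (hcont : ∀ f ∈ F, Continuous f)
    (hcover : (⋃ f ∈ F, Set.range f) = univ) (hc : TopContracting F) :
    (netFam F).Countable ∧
      ∀ x : X, ∀ U : Set X, IsOpen U → x ∈ U → ∃ N ∈ netFam F, x ∈ N ∧ N ⊆ U := by
  constructor
  · have hsub : netFam F ⊆ ⋃ n : ℕ,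
        (fun g : Fin n → (X → X) => Set.range (List.foldr (· ∘ ·) id (List.ofFn g))) ''
          (Set.pi Set.univ fun _ => F) := by
      rintro S ⟨n, _, g, hg, rfl⟩
      exact Set.mem_iUnion.2 ⟨n, ⟨g, fun i _ => hg i, rfl⟩⟩
    exact Set.Countable.mono hsub
      (Set.countable_iUnion fun n => ((Set.Finite.pi fun _ => hfin).image _).countable)
  · intro x U hU hx
    have key : ∀ n : ℕ, ∀ y : X, ∃ g : Fin n → (X → X), (∀ i, g i ∈ F) ∧
        y ∈ Set.range (List.foldr (· ∘ ·) id (List.ofFn g)) := by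
      intro n
      induction n with
      | zero => exact fun y => ⟨Fin.elim0, fun i => i.elim0, by simp⟩
      | succ n ih =>
        intro y
        have hy : y ∈ ⋃ f ∈ F, Set.range f := by rw [hcover]; trivial
        obtain ⟨f, hf, z, hz⟩ := Set.mem_iUnion₂.1 hy
        obtain ⟨g, hg, w, hw⟩ := ih z
        refine ⟨Fin.cons f g, fun i => Fin.cases hf (fun j => hg j) i, ?_⟩
        rw [comp_cons]
        exact ⟨w, by simp [Function.comp, hw, hz]⟩
    obtain ⟨n, hn, hcontr⟩ := hc {U, {x}ᶜ}
      (by rintro u (rfl | rfl)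
          · exact hU
          · exact isOpen_compl_singleton)
      (by apply Set.eq_univ_of_forall
          intro y
          by_cases h : y = x
          · exact ⟨U, Or.inl rfl, h ▸ hx⟩
          · exact ⟨{x}ᶜ, Or.inr rfl, h⟩)
    obtain ⟨g, hg, hxg⟩ := key n x
    obtain ⟨u, hu, husub⟩ := hcontr g hg
    rcases hu with rfl | rfl
    · exact ⟨_, ⟨n, hn, g, hg, rfl⟩, hxg, husub⟩
    · exact absurd (husub hxg) (by simp)
end

section
/- Every compact metrizable space X can be written as a finite disjoint union X = X₁ ∪ ⋯ ∪ Xₙ of closed-and-open unital subspaces. -/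
open Set

/-- The derived set of a subset `A` of `X`: the points of `A` that are not isolated
in the subspace topology of `A`. -/
def cbStep (X : Type) [TopologicalSpace X] (A : Set X) : Set X :=
  {x | x ∈ A ∧ ∀ U : Set X, IsOpen U → U ∩ A ≠ {x}}

/-- The `α`-th Cantor–Bendixson derivative: `X^{(α)} = ⋂_{β<α} (X^{(β)})^{(1)}`. -/
noncomputable def cbDeriv (X : Type) [TopologicalSpace X] : Ordinal → Set X :=
  (Ordinal.lt_wf.{0}).fix fun α ih => ⋂ β : {β : Ordinal // β < α}, cbStep X (ih β.1 β.2)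

/-- A space is scattered iff some Cantor–Bendixson derivative is empty. -/
def IsScatteredSp (X : Type) [TopologicalSpace X] : Prop :=
  ∃ α : Ordinal.{0}, cbDeriv X α = ∅

/-- The Cantor–Bendixson rank of a point of a scattered space. -/
noncomputable def cbRank (X : Type) [TopologicalSpace X] (x : X) : Ordinal.{0} :=
  sInf {α : Ordinal.{0} | x ∉ cbDeriv X (α + 1)}

open Classical in
/-- The scattered height of a space: the supremum of the Cantor–Bendixson ranks of its
points if the space is scattered, and `∞ = ⊤` otherwise. -/
noncomputable def scatHeight (X : Type) [TopologicalSpace X] : WithTop Ordinal :=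
  if IsScatteredSp X then ↑(⨆ x : X, cbRank X x) else ⊤

/-- A space is unital if it is uncountable, or countable with the derived set at the
scattered height a singleton. -/
def IsUnitalSp (Y : Type) [TopologicalSpace Y] : Prop :=
  ¬ Countable Y ∨ (Countable Y ∧
    ∃ α : Ordinal.{0}, scatHeight Y = ↑α ∧ ∃ a : Y, cbDeriv Y α = {a})


/-!
An uncountable space is a single unital piece. A countable compact metrizable space has empty
perfect kernel, because a nonempty perfect subset of a complete metric space contains a Cantor
set; so some Cantor–Bendixson derivative of `X` vanishes. By compactness the first vanishing stage
is a successor `β + 1`, and then `X^{(β)}` is compact without accumulation points of its own,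
hence finite. Countable metrizable spaces are totally separated, so there is a locally constant
retraction of `X` onto `X^{(β)}`. Its fibres are clopen, and since derivatives commute with
restriction to open sets, each fibre `P` has `P^{(β)}` a single point and `P^{(β+1)} = ∅`.
-/

open CantorBendixson Filter Topology TopologicalSpace

universe u

instance : Uncountable (ℕ → Bool) := by
  rw [← Cardinal.aleph0_lt_mk_iff]
  simpa using Cardinal.cantor Cardinal.aleph0

section DerivedSet

variable {X Y : Type u} [TopologicalSpace X] [TopologicalSpace Y]

theorem Topology.IsOpenEmbedding.preimage_derivedSet {f : X → Y} (hf : IsOpenEmbedding f)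
    (s : Set Y) : derivedSet (f ⁻¹' s) = f ⁻¹' derivedSet s := by
  ext x
  rw [mem_preimage, mem_derivedSet, mem_derivedSet, ← comap_principal, hf.accPt_comap_iff]

theorem Topology.IsOpenEmbedding.preimage_relDerivedSet {f : X → Y} (hf : IsOpenEmbedding f)
    (s : Set Y) : relDerivedSet (f ⁻¹' s) = f ⁻¹' relDerivedSet s := by
  simp only [relDerivedSet_apply, hf.preimage_derivedSet, preimage_inter]

theorem IsCompact.finite_of_relDerivedSet_eq_empty {s : Set X} (hs : IsCompact s)
    (h : relDerivedSet s = ∅) : s.Finite := by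
  by_contra hinf
  obtain ⟨x, hxs, hx⟩ := Set.Infinite.exists_accPt_of_subset_isCompact hinf hs subset_rfl
  exact h.subset ⟨hx, hxs⟩

theorem Topology.IsOpenEmbedding.preimage_iteratedDerivedSet {f : X → Y}
    (hf : IsOpenEmbedding f) (s : Set Y) (a : Ordinal) : (f ⁻¹' s)ᵈ[a] = f ⁻¹' sᵈ[a] := by
  induction a using Ordinal.limitRecOn with
  | zero => simp only [iteratedDerivedSet_zero]
  | add_one a ih => simp only [iteratedDerivedSet_succ, ih, hf.preimage_relDerivedSet]
  | limit a ha ih =>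
    simp only [iteratedDerivedSet_limit ha, preimage_iInter]
    exact iInter_congr fun b => ih b b.2

end DerivedSet

namespace CantorBendixson

variable {X : Type u} [TopologicalSpace X] {s : Set X}

theorem exists_iteratedDerivedSet_nonempty_and_succ_eq_empty [CompactSpace X] (hs : IsClosed s)
    (hne : s.Nonempty) (h : ∃ a, sᵈ[a] = ∅) : ∃ b, (sᵈ[b]).Nonempty ∧ sᵈ[b + 1] = ∅ := by
  set μ := sInf {a | sᵈ[a] = ∅}
  have hμ : sᵈ[μ] = ∅ := csInf_mem h
  have hlt : ∀ b < μ, (sᵈ[b]).Nonempty := fun b hb =>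
    nonempty_iff_ne_empty.2 (notMem_of_lt_csInf' (s := {a | sᵈ[a] = ∅}) hb)
  rcases Ordinal.zero_or_succ_or_isSuccLimit μ with hzero | ⟨b, hb⟩ | hlim
  · rw [hzero, iteratedDerivedSet_zero] at hμ
    exact absurd hμ hne.ne_empty
  · refine ⟨b, hlt b (hb ▸ Order.lt_succ b), ?_⟩
    rwa [← Order.succ_eq_add_one, hb]
  · have : Nonempty (Iio μ) := ⟨⟨0, hlim.bot_lt⟩⟩
    have hInter := IsCompact.nonempty_iInter_of_directed_nonempty_isCompact_isClosed
      (fun b : Iio μ => sᵈ[b])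
      ((iteratedDerivedSet_antitone s).comp_monotone (Subtype.mono_coe _)).directed_ge
      (fun b => hlt b b.2) (fun b => (isClosed_iteratedDerivedSet hs b).isCompact)
      (fun b => isClosed_iteratedDerivedSet hs b)
    rw [← iteratedDerivedSet_limit hlim, hμ] at hInter
    exact absurd hInter not_nonempty_empty

theorem exists_iteratedDerivedSet_eq_empty [IsCompletelyMetrizableSpace X] (hs : IsClosed s)
    (hc : s.Countable) : ∃ a, sᵈ[a] = ∅ := by
  obtain ⟨a, ha⟩ := iteratedDerivedSet_mem_fixedPoints s
  refine ⟨a, ?_⟩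
  rw [← perfectKernel_eq_iteratedDerivedSet_of_mem_fixedPoints ha, ← not_nonempty_iff_eq_empty]
  intro hne
  let := upgradeIsCompletelyMetrizable X
  obtain ⟨f, hf_range, -, hf_inj⟩ := (perfect_perfectKernel hs).exists_nat_bool_injection hne
  have hmaps : MapsTo f univ s := fun x _ => perfectKernel_subset s (hf_range (mem_range_self x))
  exact not_countable (countable_univ_iff.1 (hmaps.countable_of_injOn hf_inj.injOn hc))

end CantorBendixson

section ClopenPartition

variable {X : Type*} [TopologicalSpace X]

theorem IsClopen.isLocallyConstant_piecewise {C : Set X} (hC : IsClopen C) {Y : Type*}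
    {f g : X → Y} (hf : IsLocallyConstant f) (hg : IsLocallyConstant g)
    [∀ x, Decidable (x ∈ C)] : IsLocallyConstant (C.piecewise f g) := by
  refine (IsLocallyConstant.iff_eventually_eq _).2 fun x => ?_
  by_cases hx : x ∈ C
  · filter_upwards [hC.isOpen.mem_nhds hx, hf.eventually_eq x] with y hy hfy
    simp only [piecewise_eq_of_mem _ _ _ hx, piecewise_eq_of_mem _ _ _ hy, hfy]
  · filter_upwards [hC.compl.isOpen.mem_nhds hx, hg.eventually_eq x] with y hy hgy
    simp only [piecewise_eq_of_notMem _ _ _ hx, piecewise_eq_of_notMem _ _ _ hy, hgy]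

variable [TotallySeparatedSpace X]

theorem exists_isClopen_mem_disjoint_of_finite {x : X} {G : Set X} (hG : G.Finite) (hx : x ∉ G) :
    ∃ C, IsClopen C ∧ x ∈ C ∧ Disjoint C G := by
  have hsep : ∀ g ∈ G, ∃ U, IsClopen U ∧ x ∈ U ∧ g ∈ Uᶜ := fun g hg =>
    exists_isClopen_of_totally_separated (ne_of_mem_of_not_mem hg hx).symm
  choose! U hU hxU hgU using hsep
  refine ⟨⋂ g ∈ G, U g, hG.isClopen_biInter hU, mem_iInter₂.2 hxU, ?_⟩
  exact disjoint_right.2 fun g hg hgC => hgU g hg (mem_iInter₂.1 hgC g hg)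

theorem Set.Finite.exists_isLocallyConstant_retraction {F : Set X} (hF : F.Finite)
    (hne : F.Nonempty) : ∃ r : X → X, IsLocallyConstant r ∧ (∀ x, r x ∈ F) ∧ ∀ a ∈ F, r a = a := by
  classical
  induction F, hF using Set.Finite.induction_on with
  | empty => exact absurd hne not_nonempty_empty
  | @insert b G hb hG ih =>
    rcases G.eq_empty_or_nonempty with rfl | hGne
    · rw [insert_empty_eq]
      exact ⟨fun _ => b, .const b, fun _ => rfl, fun a ha => ha.symm⟩
    obtain ⟨r, hr, hrG, hrfix⟩ := ih hGne
    obtain ⟨C, hC, hbC, hCG⟩ := exists_isClopen_mem_disjoint_of_finite hG hb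
    refine ⟨C.piecewise (fun _ => b) r, hC.isLocallyConstant_piecewise (.const b) hr, ?_, ?_⟩
    · intro x
      by_cases hx : x ∈ C
      · simp [piecewise_eq_of_mem _ _ _ hx]
      · simp [piecewise_eq_of_notMem _ _ _ hx, hrG x]
    · rintro a (rfl | ha)
      · exact piecewise_eq_of_mem _ _ _ hbC
      · rw [piecewise_eq_of_notMem _ _ _ (disjoint_right.1 hCG ha), hrfix a ha]

theorem Set.Finite.exists_clopen_partition {F : Set X} (hF : F.Finite) (hne : F.Nonempty) :
    ∃ (n : ℕ) (P : Fin n → Set X), (∀ i, IsClopen (P i)) ∧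
      (Pairwise fun i j => Disjoint (P i) (P j)) ∧ (⋃ i, P i) = univ ∧
      ∀ i, ∃ a, P i ∩ F = {a} := by
  obtain ⟨r, hr, hrF, hrfix⟩ := hF.exists_isLocallyConstant_retraction hne
  have := hF.to_subtype
  let e := Finite.equivFin F
  refine ⟨Nat.card F, fun i => r ⁻¹' {(e.symm i : X)}, fun i => hr.isClopen_fiber _,
    fun i j hij => ?_, ?_, fun i => ⟨e.symm i, ?_⟩⟩
  · exact Disjoint.preimage r (disjoint_singleton.2 fun h => hij (e.symm.injective (Subtype.ext h)))
  · refine eq_univ_of_forall fun x => mem_iUnion.2 ⟨e ⟨r x, hrF x⟩, ?_⟩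
    simp only [mem_preimage, mem_singleton_iff, Equiv.symm_apply_apply]
  · ext x
    constructor
    · rintro ⟨hx, hxF⟩
      rwa [mem_preimage, hrfix x hxF] at hx
    · rintro rfl
      exact ⟨hrfix _ (e.symm i).2, (e.symm i).2⟩

end ClopenPartition

section CantorBendixsonRank

variable {X : Type} [TopologicalSpace X]

theorem cbStep_eq_relDerivedSet (A : Set X) : cbStep X A = relDerivedSet A := by
  ext x
  simp only [cbStep, relDerivedSet_apply, mem_inter_iff, mem_ofPred_eq, mem_derivedSet,
    accPt_iff_nhds]
  refine ⟨fun ⟨hxA, h⟩ => ⟨fun U hU => ?_, hxA⟩, fun ⟨h, hxA⟩ => ⟨hxA, fun U hU hUA => ?_⟩⟩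
  · obtain ⟨V, hVU, hV, hxV⟩ := mem_nhds_iff.1 hU
    by_contra! hiso
    exact h V hV (Subset.antisymm (fun y hy => hiso y ⟨hVU hy.1, hy.2⟩)
      (singleton_subset_iff.2 ⟨hxV, hxA⟩))
  · have hxU : x ∈ U := (hUA.symm ▸ mem_singleton x : x ∈ U ∩ A).1
    obtain ⟨y, hy, hyx⟩ := h U (hU.mem_nhds hxU)
    exact hyx (hUA ▸ hy : y ∈ ({x} : Set X))

theorem cbDeriv_eq_iteratedDerivedSet (α : Ordinal.{0}) :
    cbDeriv X α = (univ : Set X)ᵈ[α] := by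
  induction α using WellFoundedLT.induction with
  | _ α ih =>
  rw [cbDeriv, WellFounded.fix_eq, iteratedDerivedSet, OrdinalApprox.gfpApprox.eq_1]
  refine Eq.trans ?_ (univ_inter _).symm
  rw [iInf_subtype']
  exact iInter_congr fun β => by
    rw [cbStep_eq_relDerivedSet]
    exact congrArg relDerivedSet (ih β β.2)

theorem cbDeriv_antitone : Antitone (cbDeriv X) := by
  intro a b hab
  simp only [cbDeriv_eq_iteratedDerivedSet]
  exact iteratedDerivedSet_antitone _ hab

theorem scatHeight_eq_of_cbDeriv_succ_eq_empty {β : Ordinal.{0}} (hβ : cbDeriv X (β + 1) = ∅)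
    (hne : (cbDeriv X β).Nonempty) : scatHeight X = β := by
  obtain ⟨a, ha⟩ := hne
  have : Nonempty X := ⟨a⟩
  have hle : ∀ x, cbRank X x ≤ β := fun x => csInf_le' (by simp [hβ])
  have hge : β ≤ cbRank X a := le_csInf ⟨β, by simp [hβ]⟩ fun α hα =>
    not_lt.1 fun hlt => hα (cbDeriv_antitone (Order.add_one_le_of_lt hlt) ha)
  rw [scatHeight, if_pos ⟨β + 1, hβ⟩]
  exact congrArg _ (le_antisymm (ciSup_le hle) (le_ciSup_of_le ⟨β, forall_mem_range.2 hle⟩ a hge))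

theorem isUnitalSp_of_cbDeriv_eq_singleton [Countable X] {β : Ordinal.{0}} {a : X}
    (hβ : cbDeriv X (β + 1) = ∅) (ha : cbDeriv X β = {a}) : IsUnitalSp X :=
  Or.inr ⟨‹_›, β, scatHeight_eq_of_cbDeriv_succ_eq_empty hβ (ha ▸ singleton_nonempty a), a, ha⟩

theorem isUnitalSp_of_isOpen [Countable X] {P : Set X} (hP : IsOpen P) {β : Ordinal.{0}} {a : X}
    (hβ : cbDeriv X (β + 1) = ∅) (ha : P ∩ cbDeriv X β = {a}) : IsUnitalSp P := by
  have hrestrict : ∀ α, cbDeriv P α = Subtype.val ⁻¹' cbDeriv X α := fun α => by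
    simp only [cbDeriv_eq_iteratedDerivedSet, preimage_univ,
      ← hP.isOpenEmbedding_subtypeVal.preimage_iteratedDerivedSet]
  have haP : a ∈ P := (ha.symm ▸ mem_singleton a : a ∈ P ∩ cbDeriv X β).1
  refine isUnitalSp_of_cbDeriv_eq_singleton (β := β) (a := ⟨a, haP⟩) ?_ ?_
  · rw [hrestrict, hβ, preimage_empty]
  · rw [hrestrict]
    ext ⟨x, hx⟩
    simpa [hx] using Set.ext_iff.1 ha x

end CantorBendixsonRank

/-- Every compact metrizable space is a finite disjoint union of clopen unital subspaces. -/
theorem stmt6 {X : Type} [TopologicalSpace X] [CompactSpace X]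
    [TopologicalSpace.MetrizableSpace X] :
    ∃ (n : ℕ) (P : Fin n → Set X),
      (∀ i, IsClopen (P i)) ∧
      (Pairwise fun i j => Disjoint (P i) (P j)) ∧
      (⋃ i, P i) = univ ∧
      ∀ i, IsUnitalSp ↥(P i) := by
  by_cases hcount : Countable X
  swap
  · refine ⟨1, fun _ => univ, fun _ => isClopen_univ, Subsingleton.pairwise, iUnion_const _,
      fun _ => Or.inl fun h => hcount ?_⟩
    exact Countable.of_equiv _ (Equiv.Set.univ X)
  rcases isEmpty_or_nonempty X with hempty | _
  · exact ⟨0, finZeroElim, finZeroElim, fun i => i.elim0,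
      eq_univ_of_forall isEmptyElim, finZeroElim⟩
  have : IsCompletelyMetrizableSpace X := by
    let := metrizableSpaceMetric X
    infer_instance
  obtain ⟨β, hβne, hβ⟩ := exists_iteratedDerivedSet_nonempty_and_succ_eq_empty (X := X)
    isClosed_univ univ_nonempty (exists_iteratedDerivedSet_eq_empty isClosed_univ countable_univ)
  have hfin : ((univ : Set X)ᵈ[β]).Finite :=
    (isClosed_iteratedDerivedSet isClosed_univ β).isCompact.finite_of_relDerivedSet_eq_empty
      (by rwa [← iteratedDerivedSet_succ])
  obtain ⟨n, P, hclopen, hdisj, hcover, hsingle⟩ := hfin.exists_clopen_partition hβne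
  refine ⟨n, P, hclopen, hdisj, hcover, fun i => ?_⟩
  obtain ⟨a, ha⟩ := hsingle i
  rw [← cbDeriv_eq_iteratedDerivedSet] at hβ ha
  exact isUnitalSp_of_isOpen (hclopen i).isOpen hβ ha
end

section
/- Let F be a finite nonempty family of Banach contractions of a complete metric space X with attractor A_F. Then for every nonempty compact set K ⊆ X, the sequence of iterations F^n(K) converges to A_F in the Hausdorff metric on the hyperspace of nonempty compact subsets of X, where F(D) = ⋃_{f∈F} f(D). -/
/-! The Hutchinson operator `s ↦ ⋃ f ∈ F, f '' s` contracts the Hausdorff edistance by a common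
Lipschitz constant `c < 1` of the maps in `F`: each `f` shrinks it by its Lipschitz constant, and
the Hausdorff edistance between two unions is at most the supremum of the pairwise ones. Since `A`
is a fixed point, `d_H(Fⁿ(K), A) ≤ cⁿ d_H(K, A)`, and `d_H(K, A)` is finite as both sets are
nonempty and compact. -/

open Set Filter Metric
open scoped NNReal ENNReal Topology

namespace LipschitzWith

variable {α β : Type*} [PseudoEMetricSpace α] [PseudoEMetricSpace β] {c : ℝ≥0} {f : α → β}

lemma infEDist_image_le (hf : LipschitzWith c f) (x : α) {s : Set α} (hs : s.Nonempty) :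
    infEDist (f x) (f '' s) ≤ c * infEDist x s := by
  have : Nonempty s := hs.to_subtype
  rw [show infEDist x s = ⨅ y : s, edist x y from iInf_subtype', ENNReal.mul_iInf (by simp)]
  exact le_iInf fun y ↦
    (infEDist_le_edist_of_mem (mem_image_of_mem f y.2)).trans (hf.edist_le_mul x y)

lemma hausdorffEDist_image_le (hf : LipschitzWith c f) {s t : Set α} (hs : s.Nonempty)
    (ht : t.Nonempty) : hausdorffEDist (f '' s) (f '' t) ≤ c * hausdorffEDist s t := by
  have hmem : ∀ {s t : Set α}, t.Nonempty →
      ∀ y ∈ f '' s, infEDist y (f '' t) ≤ c * hausdorffEDist s t := by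
    rintro s t ht _ ⟨x, hx, rfl⟩
    calc infEDist (f x) (f '' t) ≤ c * infEDist x t := hf.infEDist_image_le x ht
      _ ≤ c * hausdorffEDist s t := by gcongr; exact infEDist_le_hausdorffEDist_of_mem hx
  exact hausdorffEDist_le_of_infEDist (hmem ht) (hausdorffEDist_comm (s := s) ▸ hmem hs)

end LipschitzWith

lemma Set.Finite.exists_lipschitzWith_lt_one {α β : Type*} [PseudoEMetricSpace α]
    [PseudoEMetricSpace β] {F : Set (α → β)} (hF : F.Finite)
    (h : ∀ f ∈ F, ∃ K : ℝ≥0, K < 1 ∧ LipschitzWith K f) :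
    ∃ c : ℝ≥0, c < 1 ∧ ∀ f ∈ F, LipschitzWith c f := by
  choose! k hk1 hk using h
  refine ⟨hF.toFinset.sup k, ?_, fun f hf ↦
    (hk f hf).weaken (Finset.le_sup (hF.mem_toFinset.2 hf))⟩
  exact (Finset.sup_lt_iff zero_lt_one).2 fun f hf ↦ hk1 f (hF.mem_toFinset.1 hf)

def hutchinson {α : Type*} (F : Set (α → α)) (s : Set α) : Set α :=
  ⋃ f ∈ F, f '' s

section Hutchinson

variable {α : Type*} {F : Set (α → α)} {s : Set α}

lemma Set.Nonempty.hutchinson (hs : s.Nonempty) (hF : F.Nonempty) : (hutchinson F s).Nonempty :=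
  let ⟨f, hf⟩ := hF
  (hs.image f).mono (subset_biUnion_of_mem (u := fun f ↦ f '' s) hf)

lemma IsCompact.hutchinson [TopologicalSpace α] (hF : F.Finite) (hcont : ∀ f ∈ F, Continuous f)
    (hs : IsCompact s) : IsCompact (hutchinson F s) :=
  hF.isCompact_biUnion fun f hf ↦ hs.image (hcont f hf)

lemma hausdorffEDist_hutchinson_le [PseudoEMetricSpace α] {c : ℝ≥0}
    (hF : ∀ f ∈ F, LipschitzWith c f) {t : Set α} (hs : s.Nonempty) (ht : t.Nonempty) :
    hausdorffEDist (hutchinson F s) (hutchinson F t) ≤ c * hausdorffEDist s t :=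
  hausdorffEDist_iUnion_le.trans <| iSup_le fun f ↦ hausdorffEDist_iUnion_le.trans <|
    iSup_le fun hf ↦ (hF f hf).hausdorffEDist_image_le hs ht

end Hutchinson

theorem stmt8_general {X : Type} [MetricSpace X]
    (F : Set (X → X)) (hfin : F.Finite) (hne : F.Nonempty)
    (hlip : ∀ f ∈ F, ∃ K : NNReal, K < 1 ∧ LipschitzWith K f)
    (A : Set X) (hAne : A.Nonempty) (hAcp : IsCompact A) (hA : A = ⋃ f ∈ F, f '' A)
    (K : Set X) (hKne : K.Nonempty) (hKcp : IsCompact K)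
    (S : ℕ → Set X) (hS0 : S 0 = K) (hSrec : ∀ m : ℕ, S (m + 1) = ⋃ f ∈ F, f '' S m) :
    Filter.Tendsto (fun m : ℕ => Metric.hausdorffDist (S m) A) Filter.atTop (nhds 0) := by
  obtain ⟨c, hc1, hcF⟩ := hfin.exists_lipschitzWith_lt_one hlip
  have hS : ∀ m, (S m).Nonempty ∧ IsCompact (S m) := by
    intro m
    induction m with
    | zero => exact hS0 ▸ ⟨hKne, hKcp⟩
    | succ m ih =>
      rw [hSrec]
      exact ⟨ih.1.hutchinson hne, ih.2.hutchinson hfin fun f hf ↦ (hcF f hf).continuous⟩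
  have hfix : hutchinson F A = A := hA.symm
  have hgeom : ∀ m, hausdorffEDist (S m) A ≤ c ^ m * hausdorffEDist K A := by
    intro m
    induction m with
    | zero => simp [hS0]
    | succ m ih =>
      calc hausdorffEDist (S (m + 1)) A
          = hausdorffEDist (hutchinson F (S m)) (hutchinson F A) := by rw [hfix, hSrec]; rfl
        _ ≤ c * hausdorffEDist (S m) A := hausdorffEDist_hutchinson_le hcF (hS m).1 hAne
        _ ≤ c ^ (m + 1) * hausdorffEDist K A := by
            rw [pow_succ', mul_assoc]; gcongr
  have hKA : hausdorffEDist K A ≠ ⊤ :=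
    hausdorffEDist_ne_top_of_nonempty_of_bounded hKne hAne hKcp.isBounded hAcp.isBounded
  have hlim : Tendsto (fun m ↦ (c : ℝ≥0∞) ^ m * hausdorffEDist K A) atTop (𝓝 0) := by
    simpa using ENNReal.Tendsto.mul_const
      (ENNReal.tendsto_pow_atTop_nhds_zero_of_lt_one (by exact_mod_cast hc1)) (.inr hKA)
  exact (ENNReal.tendsto_toReal ENNReal.zero_ne_top).comp <|
    tendsto_of_tendsto_of_tendsto_of_le_of_le tendsto_const_nhds hlim (fun _ ↦ zero_le) hgeom

/-- For a finite nonempty family `F` of Banach contractions of a complete metric space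
with attractor `A`, the iterations `Fⁿ(K)` of any nonempty compact set `K` converge to
`A` in the Hausdorff metric. -/
theorem stmt8 {X : Type} [MetricSpace X] [CompleteSpace X]
    (F : Set (X → X)) (hfin : F.Finite) (hne : F.Nonempty)
    (hlip : ∀ f ∈ F, ∃ K : NNReal, K < 1 ∧ LipschitzWith K f)
    (A : Set X) (hAne : A.Nonempty) (hAcp : IsCompact A) (hA : A = ⋃ f ∈ F, f '' A)
    (K : Set X) (hKne : K.Nonempty) (hKcp : IsCompact K)
    (S : ℕ → Set X) (hS0 : S 0 = K) (hSrec : ∀ m : ℕ, S (m + 1) = ⋃ f ∈ F, f '' S m) :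
    Filter.Tendsto (fun m : ℕ => Metric.hausdorffDist (S m) A) Filter.atTop (nhds 0) :=
  stmt8_general F hfin hne hlip A hAne hAcp hA K hKne hKcp S hS0 hSrec
end

section
/- For any height trees T and S with ℏ(min T) ≥ ℏ(min S) there exists a surjective height morphism f : T → S. -/
open Set

/-- The linearly ordered class of heights: `⊥` plays the role of `−1`, ordinals are
coerced, and `⊤` plays the role of `∞`. -/
abbrev Hgt : Type 1 := WithBot (WithTop Ordinal.{0})

/-- A height tree: a tree (a partial order with least element whose lower sets are
finite chains) with a height function satisfying the axioms of Definition 2.2. -/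
structure HeightTree where
  /-- the underlying set of vertices -/
  T : Type
  [po : PartialOrder T]
  [bot : OrderBot T]
  /-- lower sets are finite -/
  lower_finite : ∀ x : T, (Set.Iic x).Finite
  /-- lower sets are chains -/
  lower_chain : ∀ x : T, IsChain (· ≤ ·) (Set.Iic x)
  /-- the height function -/
  h : T → Hgt
  /-- all non-`⊥`, non-`⊤` heights are countable ordinals -/
  h_countable : ∀ x : T, ∀ α : Ordinal.{0},
    h x = ((α : WithTop Ordinal.{0}) : Hgt) → α.card ≤ Cardinal.aleph0
  /-- each vertex has exactly one successor of height `−1` (its central point) -/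
  center : ∀ x : T, ∃! y : T, x ⋖ y ∧ h y = ⊥
  /-- if `h x ∈ {−1, 0}` then the central point is the only successor of `x` -/
  succ_single : ∀ x : T, h x ≤ (0 : Hgt) → ∀ y z : T, x ⋖ y → x ⋖ z → y = z
  /-- if `h x > 0` then `x` has countably infinitely many successors -/
  succ_ctble : ∀ x : T, (0 : Hgt) < h x →
    {y : T | x ⋖ y}.Countable ∧ {y : T | x ⋖ y}.Infinite
  /-- if `h x = ∞` then all but finitely many successors of `x` have height `∞` -/
  succ_top : ∀ x : T, h x = (⊤ : Hgt) → {y : T | x ⋖ y ∧ h y ≠ (⊤ : Hgt)}.Finite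
  /-- if `0 < h x < ∞` then `h x = lim_{y ∈ suc x} (h y + 1)`: it is an upper bound … -/
  succ_le : ∀ x : T, (0 : Hgt) < h x → h x < (⊤ : Hgt) → ∀ y : T, x ⋖ y → h y + 1 ≤ h x
  /-- … and for every `β < h x` all but finitely many successors `y` have `β < h y + 1` -/
  succ_lim : ∀ x : T, (0 : Hgt) < h x → h x < (⊤ : Hgt) →
    ∀ β : Hgt, β < h x → {y : T | x ⋖ y ∧ ¬ β < h y + 1}.Finite

attribute [instance] HeightTree.po HeightTree.bot

/-- The boundary of a tree: the set of its branches (maximal chains). -/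
def HeightTree.Branch (t : HeightTree) : Type :=
  {b : Set t.T // IsMaxChain (· ≤ ·) b}

/-- The set `⇑x` of branches containing a vertex `x`. -/
def HeightTree.up (t : HeightTree) (x : t.T) : Set t.Branch := {b | x ∈ b.1}

/-- The canonical topology on the boundary of a height tree, generated by the subbase
`{⇑x : h x ≠ −1} ∪ {∂T \ ⇑x : x ∈ T}`. -/
def HeightTree.canonTop (t : HeightTree) : TopologicalSpace t.Branch :=
  TopologicalSpace.generateFrom
    ({S | ∃ x : t.T, t.h x ≠ ⊥ ∧ S = t.up x} ∪ {S | ∃ x : t.T, S = (t.up x)ᶜ})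

/-- A norm on a height tree. -/
structure IsTreeNorm (t : HeightTree) (n : t.T → ℝ) : Prop where
  mono : ∀ x y : t.T, x ≤ y → n y ≤ n x
  nonneg : ∀ x : t.T, 0 ≤ n x
  zero_iff : ∀ x : t.T, n x = 0 ↔ t.h x = ⊥
  finite : ∀ ε : ℝ, 0 < ε → {x : t.T | ε ≤ n x}.Finite

/-- `d` is the canonical distance on the boundary determined by the norm `n`:
`d x x = 0` and, for distinct branches `x ≠ y` with meet `m = max (x ∩ y)`,
`d x y = max {‖z‖ : z ∈ (x ∪ y) ∩ suc m}`. -/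
def IsCanonDist (t : HeightTree) (n : t.T → ℝ) (d : t.Branch → t.Branch → ℝ) : Prop :=
  (∀ b : t.Branch, d b b = 0) ∧
  ∀ x y : t.Branch, x ≠ y → ∀ m : t.T, IsGreatest (x.1 ∩ y.1) m →
    IsGreatest (n '' ((x.1 ∪ y.1) ∩ {z : t.T | m ⋖ z})) (d x y)

/-- A height morphism between height trees. -/
def IsHeightMorphism (t s : HeightTree) (f : t.T → s.T) : Prop :=
  (∀ x : t.T, s.h (f x) ≤ t.h x) ∧
  (∀ x y : t.T, x ⋖ y → f x ⋖ f y) ∧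
  (∀ x y : t.T, x ⋖ y → t.h y = ⊥ → s.h (f y) = ⊥) ∧
  (∀ x y z : t.T, x ⋖ y → x ⋖ z → t.h y ≠ ⊥ → t.h z ≠ ⊥ → s.h (f y) ≠ ⊥ →
    f y = f z → y = z)

/-! The morphism is built from the root down. Once `f x = u` with `ℏ u ≤ ℏ x`, it remains to
map `suc x` onto `suc u`: match the non-central successors `v` of `u` injectively with successors
`y` of `x` such that `ℏ v ≤ ℏ y`, and send everything else to `*_u`. Such a matching exists because
`suc u` is countable while, for each `v`, all but finitely many successors of `x` qualify: either
`ℏ x = ∞`, or `ℏ v < ℏ u ≤ ℏ x` and `ℏ x` is the limit of the `ℏ y + 1`. Surjectivity of `f`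
then follows by induction on `S`. -/

namespace Hgt

theorem coe_add_one (α : Ordinal.{0}) :
    (((α : WithTop Ordinal.{0}) : Hgt) + 1) = (((α + 1 : Ordinal.{0}) : WithTop Ordinal.{0}) : Hgt) :=
  rfl

theorem zero_le_of_ne_bot {a : Hgt} (ha : a ≠ ⊥) : 0 ≤ a := by
  induction a using WithBot.recBotCoe with
  | bot => exact absurd rfl ha
  | coe a => exact WithBot.coe_le_coe.mpr bot_le

theorem le_of_lt_add_one {a b : Hgt} (ha : a ≠ ⊥) (h : a < b + 1) : a ≤ b := by
  induction b using WithBot.recBotCoe with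
  | bot => exact absurd h not_lt_bot
  | coe b =>
    induction b using WithTop.recTopCoe with
    | top => exact le_top
    | coe β =>
      rw [coe_add_one] at h
      induction a using WithBot.recBotCoe with
      | bot => exact absurd rfl ha
      | coe a =>
        induction a using WithTop.recTopCoe with
        | top => simp at h
        | coe α =>
          rw [WithBot.coe_lt_coe, WithTop.coe_lt_coe, Order.lt_add_one_iff] at h
          exact WithBot.coe_le_coe.mpr (WithTop.coe_le_coe.mpr h)

theorem lt_of_add_one_le {a b : Hgt} (hb : b ≠ ⊥) (hb' : b ≠ ⊤) (h : a + 1 ≤ b) : a < b := by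
  induction a using WithBot.recBotCoe with
  | bot => exact bot_lt_iff_ne_bot.mpr hb
  | coe a =>
    induction a using WithTop.recTopCoe with
    | top => exact absurd (top_le_iff.mp h) hb'
    | coe α =>
      rw [coe_add_one] at h
      induction b using WithBot.recBotCoe with
      | bot => exact absurd rfl hb
      | coe b =>
        induction b using WithTop.recTopCoe with
        | top => exact absurd rfl hb'
        | coe β =>
          rw [WithBot.coe_le_coe, WithTop.coe_le_coe, Order.add_one_le_iff] at h
          exact WithBot.coe_lt_coe.mpr (WithTop.coe_lt_coe.mpr h)

end Hgt

theorem exists_injOn_mapsTo_forall_mem {ι α : Type*} {I : Set ι} (hI : I.Countable)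
    {B : Set α} (hB : B.Infinite) {A : ι → Set α} (hA : ∀ i ∈ I, (B \ A i).Finite) :
    ∃ ψ : ι → α, InjOn ψ I ∧ MapsTo ψ I B ∧ ∀ i ∈ I, ψ i ∈ A i := by
  obtain ⟨k, hk⟩ := Set.countable_iff_exists_injOn.mp hI
  set e : ℕ → α := fun j => hB.natEmbedding _ j
  have he : Function.Injective e := Subtype.val_injective.comp (hB.natEmbedding _).injective
  have hbound : ∀ i, ∃ c : ℕ, i ∈ I → ∀ j, c < j → e j ∈ A i := by
    intro i
    by_cases hi : i ∈ I
    · obtain ⟨c, hc⟩ := ((hA i hi).preimage he.injOn).bddAbove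
      refine ⟨c, fun _ j hj => ?_⟩
      by_contra hj'
      exact (hc ⟨(hB.natEmbedding _ j).2, hj'⟩).not_gt hj
    · exact ⟨0, fun h => absurd h hi⟩
  choose c hc using hbound
  -- `Nat.pair (k i) _` is injective in `i` and can be made as large as needed
  refine ⟨fun i => e (Nat.pair (k i) (c i + 1)), fun i hi i' hi' h => ?_,
    fun i _ => (hB.natEmbedding _ _).2, fun i hi => hc i hi _ ?_⟩
  · exact hk hi hi' (Nat.pair_eq_pair.mp (he h)).1
  · exact Nat.lt_of_lt_of_le (Nat.lt_succ_self _) (Nat.right_le_pair _ _)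

namespace HeightTree

variable (t : HeightTree)

instance wellFoundedLT : WellFoundedLT t.T :=
  StrictMono.wellFoundedLT (f := fun x => (Iic x).ncard) fun _ _ h =>
    ncard_lt_ncard (Iic_ssubset_Iic.mpr h) (t.lower_finite _)

variable {t}

theorem exists_covBy {x : t.T} (hx : x ≠ ⊥) : ∃ p, p ⋖ x := by
  obtain ⟨p, hp⟩ := ((t.lower_finite x).subset Iio_subset_Iic_self).exists_maximal
    ⟨⊥, bot_lt_iff_ne_bot.mpr hx⟩
  exact ⟨p, hp.1, fun z hpz hzx => hpz.not_ge (hp.2 hzx hpz.le)⟩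

theorem eq_of_covBy_of_covBy {p q x : t.T} (hp : p ⋖ x) (hq : q ⋖ x) : p = q := by
  by_contra hne
  rcases t.lower_chain x hp.le hq.le hne with h | h
  · exact hp.2 (lt_of_le_of_ne h hne) hq.lt
  · exact hq.2 (lt_of_le_of_ne h (Ne.symm hne)) hp.lt

open Classical in
variable (t) in
noncomputable def parent (x : t.T) : t.T :=
  if hx : x = ⊥ then ⊥ else (exists_covBy hx).choose

theorem parent_covBy {x : t.T} (hx : x ≠ ⊥) : t.parent x ⋖ x := by
  rw [parent, dif_neg hx]
  exact (exists_covBy hx).choose_spec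

theorem parent_eq_of_covBy {p x : t.T} (h : p ⋖ x) : t.parent x = p :=
  eq_of_covBy_of_covBy (parent_covBy (ne_bot_of_gt h.lt)) h

variable (t) in
noncomputable def star (x : t.T) : t.T := (t.center x).exists.choose

theorem covBy_star (x : t.T) : x ⋖ t.star x := (t.center x).exists.choose_spec.1

theorem h_star (x : t.T) : t.h (t.star x) = ⊥ := (t.center x).exists.choose_spec.2

theorem eq_star {x y : t.T} (hxy : x ⋖ y) (hy : t.h y = ⊥) : y = t.star x :=
  (t.center x).unique ⟨hxy, hy⟩ ⟨covBy_star x, h_star x⟩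

variable (t) in
def nonCentralSuc (x : t.T) : Set t.T := {y | x ⋖ y ∧ t.h y ≠ ⊥}

theorem infinite_nonCentralSuc {x : t.T} (hx : 0 < t.h x) : (t.nonCentralSuc x).Infinite := by
  refine ((t.succ_ctble x hx).2.sdiff (finite_singleton (t.star x))).mono fun y hy => ?_
  exact ⟨hy.1, fun hb => hy.2 (eq_star hy.1 hb)⟩

theorem nonCentralSuc_eq_empty {x : t.T} (hx : t.h x ≤ 0) : t.nonCentralSuc x = ∅ :=
  eq_empty_of_forall_notMem fun y ⟨hxy, hy⟩ =>
    hy (t.succ_single x hx y _ hxy (covBy_star x) ▸ h_star x)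

theorem h_lt_or_eq_top_of_covBy {x y : t.T} (hx : 0 < t.h x) (hxy : x ⋖ y) :
    t.h y < t.h x ∨ t.h x = ⊤ := by
  by_cases htop : t.h x = ⊤
  · exact Or.inr htop
  · exact Or.inl (Hgt.lt_of_add_one_le hx.ne_bot htop
      (t.succ_le x hx (lt_top_iff_ne_top.mpr htop) y hxy))

theorem finite_setOf_covBy_not_le_h {x : t.T} {β : Hgt} (hβ : β ≠ ⊥)
    (hβx : β < t.h x ∨ t.h x = ⊤) : {y | x ⋖ y ∧ ¬ β ≤ t.h y}.Finite := by
  by_cases htop : t.h x = ⊤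
  · exact (t.succ_top x htop).subset fun y ⟨hxy, hy⟩ => ⟨hxy, fun h => hy (h ▸ le_top)⟩
  · have hlt : β < t.h x := hβx.resolve_right htop
    refine (t.succ_lim x ((Hgt.zero_le_of_ne_bot hβ).trans_lt hlt) (lt_top_iff_ne_top.mpr htop)
      β hlt).subset fun y ⟨hxy, hy⟩ => ⟨hxy, fun h => hy (Hgt.le_of_lt_add_one hβ h)⟩

end HeightTree

structure IsLocalSurj (t s : HeightTree) (x : t.T) (u : s.T) (g : t.T → s.T) : Prop where
  covBy : ∀ y, x ⋖ y → u ⋖ g y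
  h_le : ∀ y, x ⋖ y → s.h (g y) ≤ t.h y
  h_eq_bot : ∀ y, x ⋖ y → t.h y = ⊥ → s.h (g y) = ⊥
  injOn : ∀ y z, x ⋖ y → x ⋖ z → s.h (g y) ≠ ⊥ → g y = g z → y = z
  surjOn : ∀ v, u ⋖ v → ∃ y, x ⋖ y ∧ g y = v

namespace HeightTree

variable {t s : HeightTree} {x : t.T} {u : s.T}

theorem exists_isLocalSurj_of_injOn {ψ : s.T → t.T} (hψ : InjOn ψ (s.nonCentralSuc u))
    (hmaps : MapsTo ψ (s.nonCentralSuc u) (t.nonCentralSuc x))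
    (hψh : ∀ v ∈ s.nonCentralSuc u, s.h v ≤ t.h (ψ v)) : ∃ g, IsLocalSurj t s x u g := by
  classical
  set N := s.nonCentralSuc u
  have : Nonempty s.T := ⟨⊥⟩
  let g : t.T → s.T := fun y => if y ∈ ψ '' N then Function.invFunOn ψ N y else s.star u
  have g_image : ∀ v ∈ N, g (ψ v) = v := fun v hv => by
    simp only [g, if_pos (mem_image_of_mem ψ hv)]
    exact hψ.leftInvOn_invFunOn hv
  have g_of_notMem : ∀ y ∉ ψ '' N, g y = s.star u := fun y hy => if_neg hy
  have notMem_of_h_eq_bot : ∀ y, t.h y = ⊥ → y ∉ ψ '' N :=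
    fun y hy ⟨v, hv, hvy⟩ => (hmaps hv).2 (hvy ▸ hy)
  have mem_of_h_ne_bot : ∀ y, s.h (g y) ≠ ⊥ → y ∈ ψ '' N := fun y hy => by
    by_contra h
    exact hy (g_of_notMem y h ▸ h_star u)
  refine ⟨g, ⟨fun y _ => ?_, fun y _ => ?_, fun y _ hy => ?_, fun y z _ _ hgy hyz => ?_,
    fun v hv => ?_⟩⟩
  · by_cases hy : y ∈ ψ '' N
    · obtain ⟨v, hv, rfl⟩ := hy
      rw [g_image v hv]
      exact hv.1
    · exact g_of_notMem y hy ▸ covBy_star u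
  · by_cases hy : y ∈ ψ '' N
    · obtain ⟨v, hv, rfl⟩ := hy
      rw [g_image v hv]
      exact hψh v hv
    · rw [g_of_notMem y hy, h_star]
      exact bot_le
  · rw [g_of_notMem y (notMem_of_h_eq_bot y hy), h_star]
  · obtain ⟨v, hv, rfl⟩ := mem_of_h_ne_bot y hgy
    obtain ⟨w, hw, rfl⟩ := mem_of_h_ne_bot z (hyz ▸ hgy)
    rw [g_image v hv, g_image w hw] at hyz
    rw [hyz]
  · by_cases hvb : s.h v = ⊥
    · refine ⟨t.star x, covBy_star x, ?_⟩
      rw [g_of_notMem _ (notMem_of_h_eq_bot _ (h_star x)), eq_star hv hvb]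
    · exact ⟨ψ v, (hmaps ⟨hv, hvb⟩).1, g_image v ⟨hv, hvb⟩⟩

theorem exists_injOn_nonCentralSuc (hle : s.h u ≤ t.h x) :
    ∃ ψ : s.T → t.T, InjOn ψ (s.nonCentralSuc u) ∧
      MapsTo ψ (s.nonCentralSuc u) (t.nonCentralSuc x) ∧
      ∀ v ∈ s.nonCentralSuc u, s.h v ≤ t.h (ψ v) := by
  rcases le_or_gt (s.h u) 0 with hu | hu
  · rw [nonCentralSuc_eq_empty hu]
    exact ⟨fun _ => ⊥, injOn_empty _, mapsTo_empty _ _, fun _ h => h.elim⟩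
  · have hcount : (s.nonCentralSuc u).Countable := (s.succ_ctble u hu).1.mono fun _ hv => hv.1
    refine exists_injOn_mapsTo_forall_mem (A := fun v => {y | s.h v ≤ t.h y}) hcount
      (infinite_nonCentralSuc (hu.trans_le hle)) fun v ⟨huv, hv⟩ => ?_
    have hvx : s.h v < t.h x ∨ t.h x = ⊤ := by
      rcases h_lt_or_eq_top_of_covBy hu huv with hlt | htop
      · exact Or.inl (hlt.trans_le hle)
      · exact Or.inr (top_le_iff.mp (htop ▸ hle))
    exact (finite_setOf_covBy_not_le_h hv hvx).subset fun y hy => ⟨hy.1.1, hy.2⟩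

theorem exists_isLocalSurj (hle : s.h u ≤ t.h x) : ∃ g, IsLocalSurj t s x u g :=
  let ⟨_, hψ, hmaps, hψh⟩ := exists_injOn_nonCentralSuc hle
  exists_isLocalSurj_of_injOn hψ hmaps hψh

open Classical in
noncomputable def glue (G : t.T → s.T → t.T → s.T) : t.T → s.T :=
  WellFoundedLT.fix fun y rec =>
    if hy : y = ⊥ then ⊥ else G (t.parent y) (rec _ (parent_covBy hy).lt) y

variable {G : t.T → s.T → t.T → s.T}

theorem glue_bot : glue G ⊥ = ⊥ := by
  rw [glue, WellFoundedLT.fix_eq, dif_pos rfl]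

theorem glue_of_covBy {y : t.T} (h : x ⋖ y) : glue G y = G x (glue G x) y := by
  obtain rfl := parent_eq_of_covBy h
  rw [glue, WellFoundedLT.fix_eq, dif_neg (ne_bot_of_gt h.lt)]

variable (hG : ∀ x u, s.h u ≤ t.h x → IsLocalSurj t s x u (G x u)) (hle : s.h ⊥ ≤ t.h ⊥)
include hG hle

theorem h_glue_le (x : t.T) : s.h (glue G x) ≤ t.h x := by
  induction x using WellFoundedLT.induction with
  | ind x ih =>
    by_cases hx : x = ⊥
    · rw [hx, glue_bot]
      exact hle
    · have hp := parent_covBy hx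
      rw [glue_of_covBy hp]
      exact (hG _ _ (ih _ hp.lt)).h_le x hp

theorem isLocalSurj_glue (x : t.T) : IsLocalSurj t s x (glue G x) (G x (glue G x)) :=
  hG _ _ (h_glue_le hG hle x)

theorem isHeightMorphism_glue : IsHeightMorphism t s (glue G) := by
  refine ⟨h_glue_le hG hle, fun x y h => ?_, fun x y h hy => ?_, fun x y z hy hz _ _ hfy hyz => ?_⟩
  · rw [glue_of_covBy h]
    exact (isLocalSurj_glue hG hle x).covBy y h
  · rw [glue_of_covBy h]
    exact (isLocalSurj_glue hG hle x).h_eq_bot y h hy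
  · rw [glue_of_covBy hy] at hfy hyz
    rw [glue_of_covBy hz] at hyz
    exact (isLocalSurj_glue hG hle x).injOn y z hy hz hfy hyz

theorem surjective_glue : Function.Surjective (glue G) := by
  intro v
  induction v using WellFoundedLT.induction with
  | ind v ih =>
    by_cases hv : v = ⊥
    · exact ⟨⊥, hv ▸ glue_bot⟩
    · have hp := parent_covBy hv
      obtain ⟨x, hx⟩ := ih _ hp.lt
      obtain ⟨y, hxy, rfl⟩ := (isLocalSurj_glue hG hle x).surjOn v (hx ▸ hp)
      exact ⟨y, glue_of_covBy hxy⟩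

end HeightTree

/-- For any height trees `T, S` with `ℏ(min T) ≥ ℏ(min S)` there exists a surjective
height morphism `f : T → S`. -/
theorem stmt12 (t s : HeightTree) (hle : s.h ⊥ ≤ t.h ⊥) :
    ∃ f : t.T → s.T, IsHeightMorphism t s f ∧ Function.Surjective f := by
  choose! G hG using fun (x : t.T) (u : s.T) (h : s.h u ≤ t.h x) => HeightTree.exists_isLocalSurj h
  exact ⟨HeightTree.glue G, HeightTree.isHeightMorphism_glue hG hle,
    HeightTree.surjective_glue hG hle⟩
end

section
/- Let X = X₁ ∪ ⋯ ∪ Xₙ be a compact metrizable space written as a disjoint union of closed-and-open subspaces, let 0 < λ < 1, and suppose that for each i the subspace Xᵢ carries an ultrametric dᵢ < 1 generating its topology and a finite family Fᵢ of self-maps of Xᵢ with Lipschitz constant ≤ λ (with respect to dᵢ) such that Xᵢ = ⋃_{f∈Fᵢ} f(Xᵢ) and the sets f(Xᵢ), f ∈ Fᵢ, are pairwise disjoint. Then the function d defined by d(x,y) = dᵢ(x,y) if x,y ∈ Xᵢ and d(x,y) = 1/λ otherwise is a compatible ultrametric on X, and each f ∈ Fᵢ extends to a map f̄ : X → Xᵢ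 with f̄(X \ Xᵢ) equal to the unique fixed point of f, such that the family F = ⋃ᵢ {f̄ : f ∈ Fᵢ} consists of λ-Lipschitz maps with X = ⋃_{g∈F} g(X) and (g(X))_{g∈F} pairwise disjoint. -/
open Set

lemma aux_fixed17 {X : Type} [TopologicalSpace X] [CompactSpace X] [T2Space X]
    (K : Set X) (hKcl : IsClosed K) (hKop : IsOpen K) (hKne : K.Nonempty)
    (D' : X → X → ℝ) (lam : ℝ) (hl0 : 0 < lam) (hl1 : lam < 1)
    (hzero : ∀ x ∈ K, ∀ y ∈ K, (D' x y = 0 ↔ x = y))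
    (hsymm : ∀ x ∈ K, ∀ y ∈ K, D' x y = D' y x)
    (htri : ∀ x ∈ K, ∀ y ∈ K, ∀ z ∈ K, D' x z ≤ max (D' x y) (D' y z))
    (hlt1 : ∀ x ∈ K, ∀ y ∈ K, D' x y < 1)
    (htop : ∀ S : Set X, S ⊆ K → (IsOpen S ↔ ∀ x ∈ S, ∃ ε > 0, {y ∈ K | D' x y < ε} ⊆ S))
    (f : X → X) (hmap : MapsTo f K K)
    (hlip : ∀ x ∈ K, ∀ y ∈ K, D' (f x) (f y) ≤ lam * D' x y) :
    ∃ p ∈ K, f p = p := by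
  have hKcomp : IsCompact K := hKcl.isCompact
  have hball : ∀ x ∈ K, ∀ δ : ℝ, 0 < δ → IsOpen {y ∈ K | D' x y < δ} := by
    intro x hx δ hδ
    rw [htop _ (sep_subset _ _)]
    rintro z ⟨hzK, hz⟩
    exact ⟨δ, hδ, fun y ⟨hyK, hy⟩ => ⟨hyK, (htri x hx z hzK y hyK).trans_lt (max_lt hz hy)⟩⟩
  have hcont : ContinuousOn f K := by
    rw [continuousOn_iff]
    intro x hx t ht hft
    have hopen : IsOpen (t ∩ K) := ht.inter hKop
    obtain ⟨ε, hε, hsub⟩ := (htop (t ∩ K) inter_subset_right).mp hopen (f x) ⟨hft, hmap hx⟩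
    refine ⟨{y ∈ K | D' x y < ε / lam}, hball x hx _ (div_pos hε hl0),
      ⟨hx, lt_of_eq_of_lt ((hzero x hx x hx).mpr rfl) (div_pos hε hl0)⟩, ?_⟩
    rintro y ⟨⟨hyK, hy⟩, -⟩
    have hlt : D' (f x) (f y) < ε := (hlip x hx y hyK).trans_lt ((lt_div_iff₀' hl0).mp hy)
    exact (hsub ⟨hmap hyK, hlt⟩).1
  have hsub' : ∀ k, f^[k] '' K ⊆ K := by
    intro k
    induction k with
    | zero => simp
    | succ k ih =>
      rw [Function.iterate_succ', Set.image_comp]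
      exact (image_mono ih).trans hmap.image_subset
  have hcomp : ∀ k, IsCompact (f^[k] '' K) := by
    intro k
    induction k with
    | zero => simpa using hKcomp
    | succ k ih =>
      rw [Function.iterate_succ', Set.image_comp]
      exact ih.image_of_continuousOn (hcont.mono (hsub' k))
  have hanti : ∀ k, f^[k+1] '' K ⊆ f^[k] '' K := by
    intro k
    rw [Function.iterate_succ, Set.image_comp]
    exact image_mono hmap.image_subset
  have hiter : ∀ k, ∀ x ∈ K, ∀ y ∈ K, D' (f^[k] x) (f^[k] y) ≤ lam ^ k * D' x y := by
    intro k
    induction k with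
    | zero => simp
    | succ k ih =>
      intro x hx y hy
      rw [Function.iterate_succ_apply', Function.iterate_succ_apply']
      calc D' (f (f^[k] x)) (f (f^[k] y)) ≤ lam * D' (f^[k] x) (f^[k] y) :=
            hlip _ (hsub' k (mem_image_of_mem _ hx)) _ (hsub' k (mem_image_of_mem _ hy))
        _ ≤ lam * (lam ^ k * D' x y) :=
            mul_le_mul_of_nonneg_left (ih x hx y hy) hl0.le
        _ = lam ^ (k+1) * D' x y := by ring
  obtain ⟨p, hp⟩ := IsCompact.nonempty_iInter_of_sequence_nonempty_isCompact_isClosed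
    (fun k => f^[k] '' K) hanti (fun k => hKne.image _) (by simpa using hKcomp)
    (fun k => (hcomp k).isClosed)
  have hpmem : ∀ k, p ∈ f^[k] '' K := fun k => mem_iInter.mp hp k
  have hpK : p ∈ K := by simpa using hpmem 0
  have hfpK : f p ∈ K := hmap hpK
  have hle : ∀ k, D' p (f p) ≤ lam ^ k := by
    intro k
    obtain ⟨y, hyK, hy⟩ := hpmem k
    have h1 : f p = f^[k] (f y) := by
      rw [← hy]
      exact (Function.iterate_succ_apply' f k y).symm.trans (Function.iterate_succ_apply f k y)
    calc D' p (f p) = D' (f^[k] y) (f^[k] (f y)) := by rw [hy, ← h1]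
      _ ≤ lam ^ k * D' y (f y) := hiter k y hyK (f y) (hmap hyK)
      _ ≤ lam ^ k * 1 := mul_le_mul_of_nonneg_left (hlt1 y hyK (f y) (hmap hyK)).le
            (pow_nonneg hl0.le k)
      _ = lam ^ k := mul_one _
  have hD0 : D' p (f p) ≤ 0 :=
    ge_of_tendsto' (tendsto_pow_atTop_nhds_zero_of_lt_one hl0.le hl1) hle
  have hnn : 0 ≤ D' p (f p) := by
    have h0 : D' p p = 0 := (hzero p hpK p hpK).mpr rfl
    have ht := htri p hpK (f p) hfpK p hpK
    rw [h0, hsymm (f p) hfpK p hpK, max_self] at ht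
    exact ht
  exact ⟨p, hpK, ((hzero p hpK (f p) hfpK).mp (le_antisymm hD0 hnn)).symm⟩

/-- Gluing Banach ultrafractal structures on the clopen pieces of a finite disjoint
decomposition of a compact metrizable space. -/
theorem stmt17 {X : Type} [TopologicalSpace X] [CompactSpace X]
    [TopologicalSpace.MetrizableSpace X]
    (n : ℕ) (P : Fin n → Set X)
    (hclop : ∀ i, IsClopen (P i)) (hne : ∀ i, (P i).Nonempty)
    (hdisj : Pairwise fun i j => Disjoint (P i) (P j))
    (hcover : (⋃ i, P i) = univ)
    (lam : ℝ) (hl0 : 0 < lam) (hl1 : lam < 1)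
    -- the ultrametrics `dᵢ < 1` on the pieces, generating their topologies
    (D : Fin n → X → X → ℝ)
    (hDzero : ∀ i, ∀ x ∈ P i, ∀ y ∈ P i, (D i x y = 0 ↔ x = y))
    (hDsymm : ∀ i, ∀ x ∈ P i, ∀ y ∈ P i, D i x y = D i y x)
    (hDtri : ∀ i, ∀ x ∈ P i, ∀ y ∈ P i, ∀ z ∈ P i, D i x z ≤ max (D i x y) (D i y z))
    (hDlt1 : ∀ i, ∀ x ∈ P i, ∀ y ∈ P i, D i x y < 1)
    (hDtop : ∀ i, ∀ S : Set X, S ⊆ P i →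
      (IsOpen S ↔ ∀ x ∈ S, ∃ ε > 0, {y ∈ P i | D i x y < ε} ⊆ S))
    -- the finite families of `λ`-Lipschitz self-maps of the pieces
    (Fi : Fin n → Set (X → X))
    (hFfin : ∀ i, (Fi i).Finite)
    (hmaps : ∀ i, ∀ f ∈ Fi i, MapsTo f (P i) (P i))
    (hlip : ∀ i, ∀ f ∈ Fi i, ∀ x ∈ P i, ∀ y ∈ P i, D i (f x) (f y) ≤ lam * D i x y)
    (hicover : ∀ i, (⋃ f ∈ Fi i, f '' P i) = P i)
    (hidisj : ∀ i, (Fi i).Pairwise fun f g => Disjoint (f '' P i) (g '' P i))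
    -- the glued function `d`
    (d : X → X → ℝ)
    (hdin : ∀ i, ∀ x ∈ P i, ∀ y ∈ P i, d x y = D i x y)
    (hdout : ∀ x y : X, (¬ ∃ i, x ∈ P i ∧ y ∈ P i) → d x y = 1 / lam) :
    -- `d` is a compatible ultrametric on `X`
    ((∀ x y : X, d x y = 0 ↔ x = y) ∧ (∀ x y : X, d x y = d y x) ∧
      (∀ x y z : X, d x z ≤ max (d x y) (d y z)) ∧
      (∀ S : Set X, IsOpen S ↔ ∀ x ∈ S, ∃ ε > 0, {y : X | d x y < ε} ⊆ S)) ∧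
    -- and the maps extend to `λ`-Lipschitz self-maps of `X` covering `X` disjointly
    ∃ G : Fin n → (X → X) → (X → X),
      (∀ i, ∀ f ∈ Fi i,
        (∀ x ∈ P i, G i f x = f x) ∧
        (∀ x ∉ P i, G i f x ∈ P i ∧ f (G i f x) = G i f x) ∧
        (∀ x y : X, d (G i f x) (G i f y) ≤ lam * d x y) ∧
        Set.range (G i f) = f '' P i) ∧
      (⋃ i, ⋃ f ∈ Fi i, Set.range (G i f)) = univ ∧
      (∀ i j, ∀ f ∈ Fi i, ∀ g ∈ Fi j, (i ≠ j ∨ f ≠ g) →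
        Disjoint (Set.range (G i f)) (Set.range (G j g))) := by
  classical
  have huniq : ∀ {i j : Fin n} {x : X}, x ∈ P i → x ∈ P j → i = j := by
    intro i j x hxi hxj
    by_contra h
    exact Set.disjoint_left.mp (hdisj h) hxi hxj
  have hmem : ∀ x : X, ∃ i, x ∈ P i := by
    intro x
    have hx : x ∈ ⋃ i, P i := by rw [hcover]; trivial
    exact mem_iUnion.mp hx
  have h1lam : (1:ℝ) < 1 / lam := (one_lt_div hl0).mpr hl1
  have hDnn : ∀ i, ∀ x ∈ P i, ∀ y ∈ P i, 0 ≤ D i x y := by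
    intro i x hx y hy
    have h0 : D i x x = 0 := (hDzero i x hx x hx).mpr rfl
    have ht := hDtri i x hx y hy x hx
    rw [h0, hDsymm i y hy x hx, max_self] at ht
    exact ht
  have hdnn : ∀ x y : X, 0 ≤ d x y := by
    intro x y
    by_cases hxy : ∃ i, x ∈ P i ∧ y ∈ P i
    · obtain ⟨i, hx, hy⟩ := hxy
      rw [hdin i x hx y hy]; exact hDnn i x hx y hy
    · rw [hdout x y hxy]; positivity
  have hdle : ∀ x y : X, d x y ≤ 1 / lam := by
    intro x y
    by_cases hxy : ∃ i, x ∈ P i ∧ y ∈ P i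
    · obtain ⟨i, hx, hy⟩ := hxy
      rw [hdin i x hx y hy]
      exact ((hDlt1 i x hx y hy).trans h1lam).le
    · rw [hdout x y hxy]
  have hzero : ∀ x y : X, d x y = 0 ↔ x = y := by
    intro x y
    constructor
    · intro h
      by_cases hxy : ∃ i, x ∈ P i ∧ y ∈ P i
      · obtain ⟨i, hx, hy⟩ := hxy
        exact (hDzero i x hx y hy).mp (by rw [← hdin i x hx y hy]; exact h)
      · rw [hdout x y hxy] at h
        exact absurd h (by positivity)
    · rintro rfl
      obtain ⟨i, hx⟩ := hmem x
      rw [hdin i x hx x hx]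
      exact (hDzero i x hx x hx).mpr rfl
  have hsymm : ∀ x y : X, d x y = d y x := by
    intro x y
    by_cases hxy : ∃ i, x ∈ P i ∧ y ∈ P i
    · obtain ⟨i, hx, hy⟩ := hxy
      rw [hdin i x hx y hy, hdin i y hy x hx, hDsymm i x hx y hy]
    · rw [hdout x y hxy, hdout y x (fun ⟨i, hy, hx⟩ => hxy ⟨i, hx, hy⟩)]
  have htri : ∀ x y z : X, d x z ≤ max (d x y) (d y z) := by
    intro x y z
    by_cases hxz : ∃ i, x ∈ P i ∧ z ∈ P i
    · obtain ⟨i, hx, hz⟩ := hxz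
      by_cases hy : y ∈ P i
      · rw [hdin i x hx z hz, hdin i x hx y hy, hdin i y hy z hz]
        exact hDtri i x hx y hy z hz
      · have hxy : ¬ ∃ j, x ∈ P j ∧ y ∈ P j := by
          rintro ⟨j, hxj, hyj⟩
          exact hy ((huniq hxj hx) ▸ hyj)
        have h1 : d x y = 1 / lam := hdout x y hxy
        calc d x z ≤ 1 / lam := hdle x z
          _ = d x y := h1.symm
          _ ≤ max (d x y) (d y z) := le_max_left _ _
    · rw [hdout x z hxz]
      by_cases hxy : ∃ j, x ∈ P j ∧ y ∈ P j
      · obtain ⟨j, hxj, hyj⟩ := hxy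
        have hzj : ¬ ∃ k, y ∈ P k ∧ z ∈ P k := by
          rintro ⟨k, hyk, hzk⟩
          exact hxz ⟨j, hxj, (huniq hyk hyj) ▸ hzk⟩
        calc (1:ℝ) / lam = d y z := (hdout y z hzj).symm
          _ ≤ max (d x y) (d y z) := le_max_right _ _
      · calc (1:ℝ) / lam = d x y := (hdout x y hxy).symm
          _ ≤ max (d x y) (d y z) := le_max_left _ _
  have hcompat : ∀ S : Set X, IsOpen S ↔ ∀ x ∈ S, ∃ ε > 0, {y : X | d x y < ε} ⊆ S := by
    intro S
    constructor
    · intro hS x hxS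
      obtain ⟨i, hx⟩ := hmem x
      have hopen : IsOpen (S ∩ P i) := hS.inter (hclop i).2
      obtain ⟨ε, hε, hball⟩ := (hDtop i (S ∩ P i) inter_subset_right).mp hopen x ⟨hxS, hx⟩
      refine ⟨min ε 1, lt_min hε one_pos, ?_⟩
      intro y hy
      simp only [mem_setOf_eq] at hy
      have hy1 : d x y < 1 := hy.trans_le (min_le_right _ _)
      have hsame : ∃ j, x ∈ P j ∧ y ∈ P j := by
        by_contra h
        rw [hdout x y h] at hy1
        exact absurd hy1 (not_lt.mpr h1lam.le)
      obtain ⟨j, hxj, hyj⟩ := hsame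
      have hij : j = i := huniq hxj hx
      subst hij
      have hD : D j x y < ε := by
        rw [← hdin j x hxj y hyj]
        exact hy.trans_le (min_le_left _ _)
      exact (hball ⟨hyj, hD⟩).1
    · intro h
      have hS : S = ⋃ i, S ∩ P i := by
        ext x
        simp only [mem_iUnion, mem_inter_iff]
        constructor
        · intro hx
          obtain ⟨i, hi⟩ := hmem x
          exact ⟨i, hx, hi⟩
        · rintro ⟨i, hx, -⟩
          exact hx
      rw [hS]
      refine isOpen_iUnion fun i => ?_
      rw [hDtop i _ inter_subset_right]
      intro x hx
      obtain ⟨ε, hε, hball⟩ := h x hx.1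
      refine ⟨ε, hε, ?_⟩
      rintro y ⟨hyP, hyD⟩
      have hd : d x y < ε := by rw [hdin i x hx.2 y hyP]; exact hyD
      exact ⟨hball hd, hyP⟩
  refine ⟨⟨hzero, hsymm, htri, hcompat⟩, ?_⟩
  have hfix : ∀ i, ∀ f ∈ Fi i, ∃ p ∈ P i, f p = p := by
    intro i f hf
    exact aux_fixed17 (P i) (hclop i).1 (hclop i).2 (hne i) (D i) lam hl0 hl1
      (hDzero i) (hDsymm i) (hDtri i) (hDlt1 i) (hDtop i) f (hmaps i f hf) (hlip i f hf)
  set fp : Fin n → (X → X) → X := fun i f =>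
    if h : ∃ p ∈ P i, f p = p then h.choose else (hne i).choose with hfpdef
  have hfp : ∀ i, ∀ f ∈ Fi i, fp i f ∈ P i ∧ f (fp i f) = fp i f := by
    intro i f hf
    have h := hfix i f hf
    simp only [hfpdef, dif_pos h]
    exact ⟨h.choose_spec.1, h.choose_spec.2⟩
  set G : Fin n → (X → X) → (X → X) := fun i f x => if x ∈ P i then f x else fp i f
    with hGdef
  have hGin : ∀ i f, ∀ x ∈ P i, G i f x = f x := fun i f x hx => if_pos hx
  have hGout : ∀ i f, ∀ x, x ∉ P i → G i f x = fp i f := fun i f x hx => if_neg hx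
  have hrange : ∀ i, ∀ f ∈ Fi i, Set.range (G i f) = f '' P i := by
    intro i f hf
    obtain ⟨hfpP, hfpfix⟩ := hfp i f hf
    apply subset_antisymm
    · rintro _ ⟨x, rfl⟩
      by_cases hx : x ∈ P i
      · rw [hGin i f x hx]
        exact mem_image_of_mem f hx
      · rw [hGout i f x hx]
        exact ⟨fp i f, hfpP, hfpfix⟩
    · rintro _ ⟨x, hx, rfl⟩
      exact ⟨x, hGin i f x hx⟩
  refine ⟨G, ?_, ?_, ?_⟩
  · intro i f hf
    obtain ⟨hfpP, hfpfix⟩ := hfp i f hf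
    have hfm := hmaps i f hf
    refine ⟨hGin i f, ?_, ?_, hrange i f hf⟩
    · intro x hx
      rw [hGout i f x hx]
      exact ⟨hfpP, hfpfix⟩
    · intro x y
      by_cases hx : x ∈ P i <;> by_cases hy : y ∈ P i
      · rw [hGin i f x hx, hGin i f y hy, hdin i _ (hfm hx) _ (hfm hy), hdin i x hx y hy]
        exact hlip i f hf x hx y hy
      · rw [hGin i f x hx, hGout i f y hy]
        have hdxy : d x y = 1 / lam :=
          hdout x y (fun ⟨j, hxj, hyj⟩ => hy ((huniq hxj hx) ▸ hyj))
        rw [hdxy, hdin i _ (hfm hx) _ hfpP, mul_one_div, div_self (ne_of_gt hl0)]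
        exact (hDlt1 i _ (hfm hx) _ hfpP).le
      · rw [hGout i f x hx, hGin i f y hy]
        have hdxy : d x y = 1 / lam :=
          hdout x y (fun ⟨j, hxj, hyj⟩ => hx ((huniq hyj hy) ▸ hxj))
        rw [hdxy, hdin i _ hfpP _ (hfm hy), mul_one_div, div_self (ne_of_gt hl0)]
        exact (hDlt1 i _ hfpP _ (hfm hy)).le
      · rw [hGout i f x hx, hGout i f y hy, (hzero _ _).mpr rfl]
        exact mul_nonneg hl0.le (hdnn x y)
  · have hpiece : ∀ i, (⋃ f ∈ Fi i, Set.range (G i f)) = P i := by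
      intro i
      rw [← hicover i]
      exact iUnion₂_congr fun f hf => hrange i f hf
    rw [iUnion_congr hpiece, hcover]
  · intro i j f hf g hg hij
    rw [hrange i f hf, hrange j g hg]
    rcases eq_or_ne i j with rfl | hne'
    · rcases hij with h | h
      · exact absurd rfl h
      · exact hidisj i hf hg h
    · exact (hdisj hne').mono ((hmaps i f hf).image_subset) ((hmaps j g hg).image_subset)
end
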